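/- arXiv:1511.02756 — 6 statements merged into one kernel-verified Lean document; each statement's English description precedes it below -/
import Mathlib

section
/- For α ≥ 4 and y > 1, the inequality (y^α - 1)/(y - 1) ≥ α + (1/2)α(α-1)(y-1) + (1/6)α(α-1)(α-2)(y-1)^2 holds. -/
/-!
The degree-`n` Taylor polynomial of `t ↦ t ^ p` at `1` lies below `t ^ p` on `[1, ∞)` as soon as
`n ≤ p`: both sides equal `1` at `t = 1`, and differentiating turns the claim for `(n + 1, p)` into
`p` times the claim for `(n, p - 1)`, so induction on `n` together with monotonicity of the
difference gives it. The theorem is the case `n = 3`, divided by `y - 1`.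
-/

open Finset Polynomial Nat

theorem le_of_hasDerivAt_le_of_le_left {f g f' g' : ℝ → ℝ} {a x : ℝ}
    (hf : ∀ t, a ≤ t → HasDerivAt f (f' t) t) (hg : ∀ t, a ≤ t → HasDerivAt g (g' t) t)
    (hfg' : ∀ t, a ≤ t → f' t ≤ g' t) (ha : f a ≤ g a) (hx : a ≤ x) : f x ≤ g x := by
  have hmono : MonotoneOn (g - f) (Set.Ici a) := by
    refine monotoneOn_of_hasDerivWithinAt_nonneg (f' := g' - f') (convex_Ici a)
      (fun t ht => ((hg t ht).sub (hf t ht)).continuousAt.continuousWithinAt)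
      (fun t ht => ?_) (fun t ht => ?_)
    · rw [interior_Ici] at ht
      exact ((hg t ht.le).sub (hf t ht.le)).hasDerivWithinAt
    · rw [interior_Ici] at ht
      exact sub_nonneg.2 (hfg' t ht.le)
  have hdiff := hmono Set.self_mem_Ici hx hx
  simp only [Pi.sub_apply] at hdiff
  linarith

/-- `(descPochhammer ℝ k).eval p / k !` is the generalized binomial coefficient `p choose k`. -/
noncomputable def rpowTaylor (n : ℕ) (p t : ℝ) : ℝ :=
  ∑ k ∈ range (n + 1), (descPochhammer ℝ k).eval p / k ! * (t - 1) ^ k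

@[simp]
theorem rpowTaylor_one_right (n : ℕ) (p : ℝ) : rpowTaylor n p 1 = 1 := by
  simp [rpowTaylor, sum_range_succ']

theorem rpowTaylor_three (p t : ℝ) :
    rpowTaylor 3 p t = 1 + p * (t - 1) + p * (p - 1) / 2 * (t - 1) ^ 2
      + p * (p - 1) * (p - 2) / 6 * (t - 1) ^ 3 := by
  simp [rpowTaylor, sum_range_succ, descPochhammer_succ_eval, factorial]

theorem descPochhammer_succ_eval_div_factorial_mul (k : ℕ) (p : ℝ) :
    (descPochhammer ℝ (k + 1)).eval p / (k + 1)! * (k + 1 : ℕ) =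
      p * ((descPochhammer ℝ k).eval (p - 1) / k !) := by
  rw [descPochhammer_succ_left, eval_mul, eval_comp, factorial_succ]
  push_cast
  field_simp
  simp

theorem hasDerivAt_rpowTaylor (n : ℕ) (p t : ℝ) :
    HasDerivAt (rpowTaylor (n + 1) p) (p * rpowTaylor n (p - 1) t) t := by
  have hterm : ∀ k ∈ range (n + 2), HasDerivAt
      (fun s => (descPochhammer ℝ k).eval p / k ! * (s - 1) ^ k)
      ((descPochhammer ℝ k).eval p / k ! * (k * (t - 1) ^ (k - 1))) t := fun k _ => by
    simpa using (((hasDerivAt_id t).sub_const 1).pow k).const_mul _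
  refine (HasDerivAt.fun_sum hterm).congr_deriv ?_
  rw [sum_range_succ', rpowTaylor, mul_sum]
  simp only [CharP.cast_eq_zero, zero_mul, mul_zero, add_zero, add_tsub_cancel_right]
  refine sum_congr rfl fun k _ => ?_
  linear_combination (t - 1) ^ k * descPochhammer_succ_eval_div_factorial_mul k p

theorem rpowTaylor_le_rpow {n : ℕ} {p t : ℝ} (hp : n ≤ p) (ht : 1 ≤ t) :
    rpowTaylor n p t ≤ t ^ p := by
  induction n generalizing p t with
  | zero => simpa [rpowTaylor] using Real.one_le_rpow ht (by simpa using hp)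
  | succ n ih =>
    push_cast at hp
    have hp_pos : 0 ≤ p := by linarith [n.cast_nonneg (α := ℝ)]
    refine le_of_hasDerivAt_le_of_le_left (fun s _ => hasDerivAt_rpowTaylor n p s)
      (fun s _ => Real.hasDerivAt_rpow_const (Or.inr (by linarith))) (fun s hs => ?_) (by simp) ht
    exact mul_le_mul_of_nonneg_left (ih (by linarith) hs) hp_pos

theorem stmt_0 (α y : ℝ) (hα : 4 ≤ α) (hy : 1 < y) :
    (y ^ α - 1) / (y - 1) ≥
      α + (1/2) * α * (α - 1) * (y - 1) + (1/6) * α * (α - 1) * (α - 2) * (y - 1) ^ 2 := by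
  have hTaylor := rpowTaylor_le_rpow (n := 3) (p := α) (by norm_num; linarith) hy.le
  rw [rpowTaylor_three] at hTaylor
  rw [ge_iff_le, le_div_iff₀ (sub_pos.2 hy)]
  linear_combination hTaylor
end

section
/- Shock curve dominates rarefaction curve: Let 1 < γ ≤ 5/3, p⁰ > 0, ρ⁰ > 0 with 0 < 1 - b·ρ⁰ < 1 (b ≥ 0). Define f_S(p) = (p - p⁰)·sqrt(2/((γ+1)ρ⁰))·(p + ((γ-1)/(γ+1))p⁰)^(−1/2)·sqrt(1 - b·ρ⁰) and f_R(p) = (2·sqrt(γp⁰/ρ⁰)/(γ−1))·((p/p⁰)^((γ−1)/(2γ)) − 1)·sqrt(1 - b·ρ⁰). Then f_S(p⁰) = f_R(p⁰) and f_S(p) > f_R(p) for every p > p⁰. -/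
/-!
In the variables `x = p / p⁰` and `a = (γ - 1) / (γ + 1)` both branches are the common positive
factor `√(γ p⁰ / ρ⁰) / γ · √(1 - b ρ⁰)` times a function of `x` alone, so it suffices to compare
these two functions on `x > 1`. They vanish at `x = 1`, so it is enough to compare their slopes,
and the logarithm of the ratio of the slopes has derivative
`(x - 1) ((1 - a) x - 2a (2a + 1)) / (2 (1 + a) x (x + a) (x + 2a + 1))`,
which is positive for `x > 1` because `γ ≤ 5/3` means `a ≤ 1/4`, whence `1 - a ≥ 2a (2a + 1)`.
-/

open Real Set

theorem lt_of_hasDerivAt_lt_of_eq {f g f' g' : ℝ → ℝ} {c x : ℝ}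
    (hf : ∀ y, c ≤ y → HasDerivAt f (f' y) y) (hg : ∀ y, c ≤ y → HasDerivAt g (g' y) y)
    (hlt : ∀ y, c < y → f' y < g' y) (hc : f c = g c) (hx : c < x) : f x < g x := by
  have hmono : StrictMonoOn (fun y => g y - f y) (Ici c) := by
    refine strictMonoOn_of_hasDerivWithinAt_pos (f' := fun y => g' y - f' y) (convex_Ici c)
      (fun y hy => ?_) (fun y hy => ?_) (fun y hy => ?_)
    · exact ((hg y hy).sub (hf y hy)).continuousAt.continuousWithinAt
    · rw [interior_Ici] at hy ⊢
      exact ((hg y hy.le).sub (hf y hy.le)).hasDerivWithinAt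
    · rw [interior_Ici] at hy
      exact sub_pos.2 (hlt y hy)
  simpa [hc] using hmono self_mem_Ici hx.le hx

-- The two branches divided by `√(γ p⁰ / ρ⁰) / γ · √(1 - b ρ⁰)`, as functions of `x = p / p⁰`,
-- with `a = (γ - 1) / (γ + 1)`; the exponent `a / (1 + a)` is `(γ - 1) / (2γ)`.
noncomputable def shockBranch (a x : ℝ) : ℝ := √(1 + a) * (x - 1) * (x + a) ^ (-(1/2) : ℝ)

noncomputable def rarefactionBranch (a x : ℝ) : ℝ := (1 + a) / a * (x ^ (a / (1 + a)) - 1)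

theorem hasDerivAt_shockBranch {a x : ℝ} (hx : 0 < x + a) :
    HasDerivAt (shockBranch a)
      (√(1 + a) * (x + 2 * a + 1) / 2 * (x + a) ^ (-(3/2) : ℝ)) x := by
  have h : HasDerivAt (shockBranch a) (√(1 + a) * 1 * (x + a) ^ (-(1/2) : ℝ) +
      √(1 + a) * (x - 1) * (1 * -(1/2) * (x + a) ^ (-(1/2) - 1 : ℝ))) x :=
    (((hasDerivAt_id' x).sub_const 1).const_mul _).mul
      (((hasDerivAt_id' x).add_const a).rpow_const (Or.inl hx.ne'))
  refine h.congr_deriv ?_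
  rw [show (-(1/2) - 1 : ℝ) = -(3/2) by norm_num, show (-(1/2) : ℝ) = 1 + -(3/2) by norm_num,
    rpow_one_add' hx.le (by norm_num)]
  ring

theorem hasDerivAt_rarefactionBranch {a x : ℝ} (ha : a ≠ 0) (ha' : 1 + a ≠ 0) (hx : 0 < x) :
    HasDerivAt (rarefactionBranch a) (x ^ (a / (1 + a) - 1)) x := by
  have h : HasDerivAt (rarefactionBranch a)
      ((1 + a) / a * (1 * (a / (1 + a)) * x ^ (a / (1 + a) - 1))) x :=
    (((hasDerivAt_id' x).rpow_const (Or.inl hx.ne')).sub_const 1).const_mul _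
  refine h.congr_deriv ?_
  field_simp

theorem rarefactionBranch_slope_lt_shockBranch_slope {a x : ℝ} (ha : 0 < a) (ha4 : a ≤ 1/4)
    (hx : 1 < x) :
    x ^ (a / (1 + a) - 1) < √(1 + a) * (x + 2 * a + 1) / 2 * (x + a) ^ (-(3/2) : ℝ) := by
  have hx0 : 0 < x := by linarith
  let L (y : ℝ) : ℝ := log (y + (2 * a + 1)) - 3/2 * log (y + a) + log y / (1 + a)
  have hL' (y : ℝ) (hy : 1 ≤ y) :
      HasDerivAt L ((y + (2 * a + 1))⁻¹ - 3/2 * (y + a)⁻¹ + y⁻¹ / (1 + a)) y := by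
    have h := ((((hasDerivAt_id' y).add_const (2 * a + 1)).log (by positivity)).sub
      ((((hasDerivAt_id' y).add_const a).log (by positivity)).const_mul (3/2))).add
      ((hasDerivAt_log (by positivity)).div_const (1 + a))
    rw [one_div, one_div] at h
    exact h
  have hL'_pos (y : ℝ) (hy : 1 < y) :
      0 < (y + (2 * a + 1))⁻¹ - 3/2 * (y + a)⁻¹ + y⁻¹ / (1 + a) := by
    have hy0 : 0 < y := by linarith
    have e : (y + (2 * a + 1))⁻¹ - 3/2 * (y + a)⁻¹ + y⁻¹ / (1 + a) =
        (y - 1) * ((1 - a) * y - 2 * a * (2 * a + 1)) /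
          (2 * (1 + a) * y * (y + a) * (y + (2 * a + 1))) := by
      field_simp
      ring
    rw [e]
    apply div_pos _ (by positivity)
    apply mul_pos (by linarith)
    nlinarith
  have hLx : L 1 < L x :=
    lt_of_hasDerivAt_lt_of_eq (f' := fun _ => 0) (fun y _ => hasDerivAt_const y (L 1)) hL'
      hL'_pos rfl hx
  have hL1 : L 1 = log 2 - log (1 + a) / 2 := by
    simp only [L, log_one, zero_div, add_zero]
    rw [show (1 : ℝ) + (2 * a + 1) = 2 * (1 + a) by ring, log_mul two_ne_zero (by positivity)]
    ring
  -- the logarithms of the two slopes differ by `L x - L 1`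
  rw [← log_lt_log_iff (by positivity) (by positivity), log_rpow hx0,
    log_mul (by positivity) (by positivity), log_div (by positivity) two_ne_zero,
    log_mul (by positivity) (by positivity), log_sqrt (by positivity), log_rpow (by positivity)]
  have e : (a / (1 + a) - 1) * log x = -(log x / (1 + a)) := by
    field_simp
    ring
  simp only [L, add_assoc] at hLx hL1 ⊢
  linarith

theorem rarefactionBranch_lt_shockBranch {a x : ℝ} (ha : 0 < a) (ha4 : a ≤ 1/4) (hx : 1 < x) :
    rarefactionBranch a x < shockBranch a x :=
  lt_of_hasDerivAt_lt_of_eq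
    (fun y hy => hasDerivAt_rarefactionBranch ha.ne' (by positivity) (by linarith))
    (fun y hy => hasDerivAt_shockBranch (by linarith))
    (fun y hy => rarefactionBranch_slope_lt_shockBranch_slope ha ha4 hy)
    (by simp [rarefactionBranch, shockBranch]) hx

theorem shock_eq_mul_shockBranch {γ p0 ρ0 p : ℝ} (hγ : 1 ≤ γ) (hp0 : 0 < p0) (hρ0 : 0 < ρ0)
    (hp : 0 ≤ p) :
    (p - p0) * √(2 / ((γ + 1) * ρ0)) * (p + (γ - 1) / (γ + 1) * p0) ^ (-(1/2) : ℝ) =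
      √(γ * p0 / ρ0) / γ * shockBranch ((γ - 1) / (γ + 1)) (p / p0) := by
  have ha : 0 ≤ (γ - 1) / (γ + 1) := div_nonneg (by linarith) (by linarith)
  have hsub : p - p0 = p0 * (p / p0 - 1) := by field_simp
  have hadd : p + (γ - 1) / (γ + 1) * p0 = p0 * (p / p0 + (γ - 1) / (γ + 1)) := by field_simp
  have hsqrt : p0 * p0 ^ (-(1/2) : ℝ) = √p0 := by
    rw [sqrt_eq_rpow, ← rpow_one_add' hp0.le (by norm_num)]
    norm_num
  have hscale : p0 * p0 ^ (-(1/2) : ℝ) * √(2 / ((γ + 1) * ρ0)) =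
      √(γ * p0 / ρ0) / γ * √(1 + (γ - 1) / (γ + 1)) := by
    rw [hsqrt, ← sqrt_mul hp0.le, ← sq_eq_sq₀ (by positivity) (by positivity), mul_pow, div_pow,
      sq_sqrt (by positivity), sq_sqrt (by positivity), sq_sqrt (by positivity)]
    field_simp
    ring
  rw [hsub, hadd, mul_rpow hp0.le (by positivity), shockBranch]
  linear_combination (p / p0 - 1) * (p / p0 + (γ - 1) / (γ + 1)) ^ (-(1/2) : ℝ) * hscale

theorem rarefaction_eq_mul_rarefactionBranch {γ p0 ρ0 p : ℝ} (hγ : 1 < γ) :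
    2 * √(γ * p0 / ρ0) / (γ - 1) * ((p / p0) ^ ((γ - 1) / (2 * γ)) - 1) =
      √(γ * p0 / ρ0) / γ * rarefactionBranch ((γ - 1) / (γ + 1)) (p / p0) := by
  have hγ0 : γ ≠ 0 := by linarith
  have hγ1 : γ - 1 ≠ 0 := by linarith
  have hγ2 : γ + 1 ≠ 0 := by linarith
  have h1a : 1 + (γ - 1) / (γ + 1) = 2 * γ / (γ + 1) := by
    field_simp
    ring
  rw [rarefactionBranch, h1a, div_div_div_cancel_right₀ hγ2]
  field_simp

theorem stmt_2_general (γ b p0 ρ0 : ℝ) (hγ1 : 1 < γ) (hγ2 : γ ≤ 5/3)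
    (hp0 : 0 < p0) (hρ0 : 0 < ρ0) (hcov0 : 0 < 1 - b * ρ0)
    (fS fR : ℝ → ℝ)
    (hfS : ∀ p, fS p = (p - p0) * Real.sqrt (2 / ((γ + 1) * ρ0)) *
        (p + (γ - 1) / (γ + 1) * p0) ^ (-(1/2) : ℝ) * Real.sqrt (1 - b * ρ0))
    (hfR : ∀ p, fR p = 2 * Real.sqrt (γ * p0 / ρ0) / (γ - 1) *
        ((p / p0) ^ ((γ - 1) / (2 * γ)) - 1) * Real.sqrt (1 - b * ρ0)) :
    fS p0 = fR p0 ∧ ∀ p, p0 < p → fR p < fS p := by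
  refine ⟨by simp [hfS, hfR, hp0.ne'], fun p hp => ?_⟩
  have ha : 0 < (γ - 1) / (γ + 1) := div_pos (by linarith) (by linarith)
  have ha4 : (γ - 1) / (γ + 1) ≤ 1/4 := by rw [div_le_iff₀ (by linarith)]; linarith
  have hbranch := rarefactionBranch_lt_shockBranch ha ha4 ((one_lt_div hp0).2 hp)
  have hc : 0 < √(γ * p0 / ρ0) / γ := by positivity
  rw [hfS, hfR, shock_eq_mul_shockBranch hγ1.le hp0 hρ0 (by linarith),
    rarefaction_eq_mul_rarefactionBranch hγ1]
  exact mul_lt_mul_of_pos_right (mul_lt_mul_of_pos_left hbranch hc) (sqrt_pos.2 hcov0)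

theorem stmt_2 (γ b p0 ρ0 : ℝ) (hγ1 : 1 < γ) (hγ2 : γ ≤ 5/3) (hb : 0 ≤ b)
    (hp0 : 0 < p0) (hρ0 : 0 < ρ0) (hcov0 : 0 < 1 - b * ρ0) (hcov1 : 1 - b * ρ0 < 1)
    (fS fR : ℝ → ℝ)
    (hfS : ∀ p, fS p = (p - p0) * Real.sqrt (2 / ((γ + 1) * ρ0)) *
        (p + (γ - 1) / (γ + 1) * p0) ^ (-(1/2) : ℝ) * Real.sqrt (1 - b * ρ0))
    (hfR : ∀ p, fR p = 2 * Real.sqrt (γ * p0 / ρ0) / (γ - 1) *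
        ((p / p0) ^ ((γ - 1) / (2 * γ)) - 1) * Real.sqrt (1 - b * ρ0)) :
    fS p0 = fR p0 ∧ ∀ p, p0 < p → fR p < fS p :=
  stmt_2_general γ b p0 ρ0 hγ1 hγ2 hp0 hρ0 hcov0 fS fR hfS hfR
end

section
/- If γ > 5/3 (equivalently α = 2 + 2/(γ-1) < 5), then there exists x₀ > 1 such that the shock curve value is strictly below the rarefaction curve value at x₀, i.e., the scaled functions f̃_S(x) = (x-1)/sqrt(x + (γ-1)/(γ+1)) · sqrt(2/(γ+1)) and f̃_R(x) = (2√γ/(γ-1))·(x^((γ-1)/(2γ)) - 1) satisfy f̃_S(x₀) < f̃_R(x₀). -/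
/-! With `m = (γ - 1) / (2γ)` the inequality `f̃_S(x) < f̃_R(x)` becomes
`m (x - 1) < (x ^ m - 1) √((1 - m) x + m)`. At `x = 1 + ε` both sides equal `mε` to first order,
and the right side wins at order `ε³` by `m (1 - m) (5m - 1) ε³ / 24`, which is positive exactly when
`m > 1/5`, i.e. `γ > 5/3`. To control `(1 + ε) ^ m` we use that for `s ≥ 0` the binomial remainder
`(1 + s) ^ p - ∑_{k ≤ n} (p choose k) s ^ k` has the sign of `p choose (n + 1)`: its derivative is
`p` times the remainder for `p - 1`, so this follows by induction on `n`. -/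

open Finset Set Filter Topology

theorem Ring.natCast_succ_mul_choose_succ (p : ℝ) (k : ℕ) :
    (k + 1 : ℝ) * Ring.choose p (k + 1) = p * Ring.choose (p - 1) k := by
  simpa using Ring.choose_smul_choose p (Nat.le_add_left 1 k)

theorem Ring.choose_succ_eq_mul_div (p : ℝ) (k : ℕ) :
    Ring.choose p (k + 1) = p * Ring.choose (p - 1) k / (k + 1) := by
  rw [← Ring.natCast_succ_mul_choose_succ]
  field_simp

noncomputable def binomialTaylor (p : ℝ) (n : ℕ) (s : ℝ) : ℝ :=
  ∑ k ∈ range (n + 1), Ring.choose p k * s ^ k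

@[simp]
theorem binomialTaylor_zero (p s : ℝ) : binomialTaylor p 0 s = 1 := by
  simp [binomialTaylor]

@[simp]
theorem binomialTaylor_apply_zero (p : ℝ) (n : ℕ) : binomialTaylor p n 0 = 1 := by
  simp [binomialTaylor, sum_range_succ']

theorem hasDerivAt_binomialTaylor (p : ℝ) (n : ℕ) (s : ℝ) :
    HasDerivAt (binomialTaylor p (n + 1)) (p * binomialTaylor (p - 1) n s) s := by
  have h : HasDerivAt (fun s ↦ ∑ k ∈ range (n + 1), Ring.choose p (k + 1) * s ^ (k + 1) + 1)
      (∑ k ∈ range (n + 1), Ring.choose p (k + 1) * ((k + 1 : ℕ) * s ^ k)) s :=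
    (HasDerivAt.fun_sum fun k _ ↦ (hasDerivAt_pow (k + 1) s).const_mul _).add_const 1
  convert h using 1
  · ext s
    simp [binomialTaylor, sum_range_succ' _ (n + 1)]
  · simp only [binomialTaylor, mul_sum]
    refine sum_congr rfl fun k _ ↦ ?_
    have := Ring.natCast_succ_mul_choose_succ p k
    push_cast
    linear_combination (-s ^ k) * this

theorem monotoneOn_Ici_of_hasDerivAt_nonneg {f f' : ℝ → ℝ} {a : ℝ}
    (hf : ∀ x ∈ Ici a, HasDerivAt f (f' x) x) (hf' : ∀ x ∈ Ioi a, 0 ≤ f' x) :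
    MonotoneOn f (Ici a) :=
  monotoneOn_of_hasDerivWithinAt_nonneg (convex_Ici a)
    (fun x hx ↦ (hf x hx).continuousAt.continuousWithinAt)
    (fun x hx ↦ (hf x (interior_subset hx)).hasDerivWithinAt) (by simpa using hf')

theorem choose_mul_one_add_rpow_sub_binomialTaylor_nonneg (n : ℕ) (p : ℝ) {s : ℝ} (hs : 0 ≤ s) :
    0 ≤ Ring.choose p (n + 1) * ((1 + s) ^ p - binomialTaylor p n s) := by
  induction n generalizing p s with
  | zero =>
    have h1 : 1 ≤ 1 + s := by linarith
    rcases le_total 0 p with hp | hp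
    · simpa using mul_nonneg hp (sub_nonneg.2 (Real.one_le_rpow h1 hp))
    · simpa using mul_nonneg_of_nonpos_of_nonpos hp
        (sub_nonpos.2 (Real.rpow_le_one_of_one_le_of_nonpos h1 hp))
  | succ n ih =>
    have hderiv : ∀ t ∈ Ici (0 : ℝ), HasDerivAt
        (fun t ↦ Ring.choose p (n + 2) * ((1 + t) ^ p - binomialTaylor p (n + 1) t))
        (Ring.choose p (n + 2) * (p * (1 + t) ^ (p - 1) - p * binomialTaylor (p - 1) n t)) t := by
      intro t ht
      have hpow := ((hasDerivAt_id' t).const_add 1).rpow_const (p := p)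
        (Or.inl (by linarith [mem_Ici.1 ht]))
      exact ((hpow.sub (hasDerivAt_binomialTaylor p n t)).const_mul _).congr_deriv (by ring)
    have hmono := monotoneOn_Ici_of_hasDerivAt_nonneg hderiv fun t ht ↦ by
      have key : (n + 2 : ℝ) * (Ring.choose p (n + 2) *
            (p * (1 + t) ^ (p - 1) - p * binomialTaylor (p - 1) n t))
          = p ^ 2 * (Ring.choose (p - 1) (n + 1) *
            ((1 + t) ^ (p - 1) - binomialTaylor (p - 1) n t)) := by
        have := Ring.natCast_succ_mul_choose_succ p (n + 1)
        push_cast at this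
        linear_combination (p * (1 + t) ^ (p - 1) - p * binomialTaylor (p - 1) n t) * this
      exact nonneg_of_mul_nonneg_right (key ▸ mul_nonneg (sq_nonneg p) (ih (p - 1) (le_of_lt ht)))
        (by positivity)
    simpa using hmono (mem_Ici.2 le_rfl) hs hs

theorem binomialTaylor_le_one_add_rpow {p : ℝ} {n : ℕ} (hp : 0 < Ring.choose p (n + 1)) {s : ℝ}
    (hs : 0 ≤ s) : binomialTaylor p n s ≤ (1 + s) ^ p :=
  sub_nonneg.1 <|
    nonneg_of_mul_nonneg_right (choose_mul_one_add_rpow_sub_binomialTaylor_nonneg n p hs) hp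

theorem one_add_div_two_sub_sq_div_eight_le_sqrt {u : ℝ} (hu₀ : 0 ≤ u) (hu : u ≤ 8) :
    1 + u / 2 - u ^ 2 / 8 ≤ √(1 + u) :=
  (le_abs_self _).trans <| Real.abs_le_sqrt <| by nlinarith [pow_nonneg hu₀ 3]

theorem exists_one_lt_cubic_mul_quadratic {a b d : ℝ} (hb : 3 * a ^ 2 / 8 < b) :
    ∃ ε, 0 < ε ∧ ε < 1 ∧
      1 < (1 - a / 2 * ε + b * ε ^ 2 - d * ε ^ 3) * (1 + a * ε / 2 - (a * ε) ^ 2 / 8) := by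
  have hexpand (ε : ℝ) :
      (1 - a / 2 * ε + b * ε ^ 2 - d * ε ^ 3) * (1 + a * ε / 2 - (a * ε) ^ 2 / 8)
      = 1 + ε ^ 2 * ((b - 3 * a ^ 2 / 8) + ε * ((a ^ 3 / 16 + a * b / 2 - d)
        - (a ^ 2 * b / 8 + a * d / 2) * ε + a ^ 2 * d / 8 * ε ^ 2)) := by
    ring
  have hpos : ∀ᶠ ε in 𝓝 (0 : ℝ), 0 < (b - 3 * a ^ 2 / 8) + ε * ((a ^ 3 / 16 + a * b / 2 - d)
      - (a ^ 2 * b / 8 + a * d / 2) * ε + a ^ 2 * d / 8 * ε ^ 2) :=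
    (Continuous.tendsto' (by fun_prop) 0 (b - 3 * a ^ 2 / 8) (by simp)).eventually_const_lt
      (by linarith)
  obtain ⟨ε, ⟨hq, hε₁⟩, hε₀⟩ :=
    (((hpos.and (eventually_lt_nhds one_pos)).filter_mono nhdsWithin_le_nhds).and
      (self_mem_nhdsWithin (s := Ioi 0))).exists
  refine ⟨ε, hε₀, hε₁, ?_⟩
  rw [hexpand]
  have := mul_pos (pow_pos hε₀ 2) hq
  linarith

theorem exists_mul_sub_one_lt_rpow_sub_one_mul_sqrt {m : ℝ} (hm : 1 / 5 < m) (hm₁ : m < 1) :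
    ∃ x, 1 < x ∧ m * (x - 1) < (x ^ m - 1) * √((1 - m) * x + m) := by
  obtain ⟨a, rfl⟩ : ∃ a, m = 1 - a := ⟨1 - m, by ring⟩
  have ha : 0 < a := by linarith
  obtain ⟨ε, hε₀, hε₁, hPS⟩ := exists_one_lt_cubic_mul_quadratic (a := a) (b := a * (1 + a) / 6)
    (d := a * (1 + a) * (2 + a) / 24) (by nlinarith)
  set P := 1 - a / 2 * ε + a * (1 + a) / 6 * ε ^ 2 - a * (1 + a) * (2 + a) / 24 * ε ^ 3
  set S := 1 + a * ε / 2 - (a * ε) ^ 2 / 8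
  have haε : a * ε < 1 := by nlinarith
  have hS0 : 0 ≤ S := by simp only [S]; nlinarith [mul_pos ha hε₀]
  have hS : S ≤ √(1 + a * ε) :=
    one_add_div_two_sub_sq_div_eight_le_sqrt (by positivity) (by linarith)
  have hchoose : 0 < Ring.choose (1 - a) 5 := by
    have h : Ring.choose (1 - a) 5 = (1 - a) * a * (1 + a) * (2 + a) * (3 + a) / 120 := by
      simp only [Ring.choose_succ_eq_mul_div, Ring.choose_zero_right]
      push_cast
      ring
    rw [h]
    apply div_pos _ (by norm_num)
    apply_rules [mul_pos] <;> linarith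
  have hT : 1 + (1 - a) * ε * P ≤ (1 + ε) ^ (1 - a) := by
    convert binomialTaylor_le_one_add_rpow hchoose hε₀.le using 1
    simp [binomialTaylor, sum_range_succ, Ring.choose_succ_eq_mul_div, P]
    ring
  have hX : 0 ≤ (1 + ε) ^ (1 - a) - 1 :=
    sub_nonneg.2 (Real.one_le_rpow (by linarith) (by linarith))
  refine ⟨1 + ε, by linarith, ?_⟩
  rw [show (1 - (1 - a)) * (1 + ε) + (1 - a) = 1 + a * ε by ring, add_sub_cancel_left]
  calc (1 - a) * ε < (1 - a) * ε * (P * S) := lt_mul_of_one_lt_right (by nlinarith) hPS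
    _ = (1 - a) * ε * P * S := by ring
    _ ≤ ((1 + ε) ^ (1 - a) - 1) * S := mul_le_mul_of_nonneg_right (by linarith) hS0
    _ ≤ ((1 + ε) ^ (1 - a) - 1) * √(1 + a * ε) := mul_le_mul_of_nonneg_left hS hX

theorem shock_curve_eq {γ x : ℝ} (hγ : 0 < γ) :
    (x - 1) / √(x + (γ - 1) / (γ + 1)) * √(2 / (γ + 1)) =
      (x - 1) / √((1 - (γ - 1) / (2 * γ)) * x + (γ - 1) / (2 * γ)) / √γ := by
  have harg : x + (γ - 1) / (γ + 1) =
      2 / (γ + 1) * (γ * ((1 - (γ - 1) / (2 * γ)) * x + (γ - 1) / (2 * γ))) := by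
    field_simp
    ring
  rw [harg, Real.sqrt_mul (by positivity), Real.sqrt_mul hγ.le]
  have : 0 < √(2 / (γ + 1)) := Real.sqrt_pos.2 (by positivity)
  field_simp

theorem rarefaction_coeff_eq {γ : ℝ} (hγ : 0 < γ) :
    2 * √γ / (γ - 1) = 1 / ((γ - 1) / (2 * γ) * √γ) := by
  have : 0 < √γ := Real.sqrt_pos.2 hγ
  field_simp
  rw [Real.sq_sqrt hγ.le]

theorem stmt_3 (γ : ℝ) (hγ : 5/3 < γ) :
    ∃ x₀ : ℝ, 1 < x₀ ∧
      (x₀ - 1) / Real.sqrt (x₀ + (γ - 1) / (γ + 1)) * Real.sqrt (2 / (γ + 1)) <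
        2 * Real.sqrt γ / (γ - 1) * (x₀ ^ ((γ - 1) / (2 * γ)) - 1) := by
  have hγ₀ : 0 < γ := by linarith
  have hm : 1 / 5 < (γ - 1) / (2 * γ) := by rw [lt_div_iff₀ (by positivity)]; linarith
  have hm₁ : (γ - 1) / (2 * γ) < 1 := by rw [div_lt_one (by positivity)]; linarith
  obtain ⟨x, hx₁, hx⟩ := exists_mul_sub_one_lt_rpow_sub_one_mul_sqrt hm hm₁
  refine ⟨x, hx₁, ?_⟩
  have hQ : 0 < √((1 - (γ - 1) / (2 * γ)) * x + (γ - 1) / (2 * γ)) :=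
    Real.sqrt_pos.2 (by nlinarith)
  rw [shock_curve_eq hγ₀, rarefaction_coeff_eq hγ₀, div_div, one_div_mul_eq_div,
    div_lt_div_iff₀ (by positivity) (by positivity)]
  convert mul_lt_mul_of_pos_right hx (Real.sqrt_pos.2 hγ₀) using 1 <;> ring
end

section
/- For all x ≥ 1 and γ > 1, the function Δ₀(x) := (1 + ((γ+1)/(2γ))(x-1))^(1/2) − (x-1)·(x + (γ-1)/(γ+1))^(−1/2)·sqrt(2/(γ(γ+1))) satisfies Δ₀(x) ≥ c(γ), where c(γ) = 2·sqrt(2(γ-1))/(γ+1) if 1 < γ ≤ 3 and c(γ) = 1 if γ > 3. -/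
/-!
Substituting `u = √(x + (γ-1)/(γ+1))`, so that `x - 1 = u² - 2γ/(γ+1)`, turns `Δ₀` into
`√((γ+1)/(2γ)) · (a u + b / u)` with `a = (γ-1)/(γ+1)` and `b = 4γ/(γ+1)²`, on the range
`u ≥ √(2γ/(γ+1))`. By AM-GM this is at least `√((γ+1)/(2γ)) · 2√(ab) = 2√(2(γ-1))/(γ+1)`.
The AM-GM equality point `√(b/a)` lies in the range exactly when `γ ≤ 3`; for `γ ≥ 3`,
`a u + b / u` is increasing on the range, so `Δ₀` is at least its value `1` at `x = 1`.
-/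

open Real Set

lemma two_sqrt_mul_le_mul_add_div {a b u : ℝ} (ha : 0 ≤ a) (hb : 0 ≤ b) (hu : 0 < u) :
    2 * √(a * b) ≤ a * u + b / u := by
  have hab : a * b = (a * u) * (b / u) := by field_simp
  rw [hab, sqrt_mul (by positivity), ← mul_assoc]
  calc 2 * √(a * u) * √(b / u) ≤ √(a * u) ^ 2 + √(b / u) ^ 2 := two_mul_le_add_sq _ _
    _ = a * u + b / u := by rw [sq_sqrt (by positivity), sq_sqrt (by positivity)]

lemma monotoneOn_mul_add_div {a b d : ℝ} (hb : 0 ≤ b) (hd : 0 < d) (hbad : b ≤ a * d ^ 2) :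
    MonotoneOn (fun u => a * u + b / u) (Ici d) := by
  intro u (hu : d ≤ u) v (hv : d ≤ v) huv
  have hu0 : 0 < u := hd.trans_le hu
  have hv0 : 0 < v := hd.trans_le hv
  have hquot : b / (u * v) ≤ a :=
    calc b / (u * v) ≤ b / d ^ 2 := by gcongr; nlinarith
      _ ≤ a := by rwa [div_le_iff₀ (by positivity)]
  have hdiff : a * v + b / v - (a * u + b / u) = (v - u) * (a - b / (u * v)) := by
    field_simp; ring
  have := mul_nonneg (sub_nonneg.mpr huv) (sub_nonneg.mpr hquot)
  dsimp only
  linarith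

noncomputable def gapProfile (γ u : ℝ) : ℝ :=
  √((γ + 1) / (2 * γ)) * ((γ - 1) / (γ + 1) * u + 4 * γ / (γ + 1) ^ 2 / u)

lemma gap_eq_gapProfile {γ x : ℝ} (hγ : 1 < γ) (hx : 1 ≤ x) :
    √(1 + (γ + 1) / (2 * γ) * (x - 1)) -
        (x - 1) / √(x + (γ - 1) / (γ + 1)) * √(2 / (γ * (γ + 1))) =
      gapProfile γ √(x + (γ - 1) / (γ + 1)) := by
  have hγ0 : 0 < γ := by linarith
  have hs : 0 < x + (γ - 1) / (γ + 1) := by positivity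
  set u := √(x + (γ - 1) / (γ + 1)) with hu_def
  have hu : 0 < u := sqrt_pos.mpr hs
  have hu2 : u ^ 2 = x + (γ - 1) / (γ + 1) := sq_sqrt hs.le
  have hfirst : 1 + (γ + 1) / (2 * γ) * (x - 1) = (γ + 1) / (2 * γ) * u ^ 2 := by
    rw [hu2]; field_simp; ring
  have hsecond : 2 / (γ * (γ + 1)) = (γ + 1) / (2 * γ) * (2 / (γ + 1)) ^ 2 := by
    field_simp
  have hx1 : x - 1 = u ^ 2 - 2 * γ / (γ + 1) := by rw [hu2]; field_simp; ring
  rw [hfirst, hsecond, sqrt_mul (by positivity), sqrt_mul (by positivity),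
    sqrt_sq hu.le, sqrt_sq (by positivity), hx1, gapProfile]
  field_simp
  ring

lemma two_sqrt_div_le_gapProfile {γ u : ℝ} (hγ : 1 < γ) (hu : 0 < u) :
    2 * √(2 * (γ - 1)) / (γ + 1) ≤ gapProfile γ u := by
  have hγ0 : 0 < γ := by linarith
  have hab : (γ + 1) / (2 * γ) * ((γ - 1) / (γ + 1) * (4 * γ / (γ + 1) ^ 2)) =
      2 * (γ - 1) / (γ + 1) ^ 2 := by
    field_simp; ring
  calc 2 * √(2 * (γ - 1)) / (γ + 1)
      = √((γ + 1) / (2 * γ)) * (2 * √((γ - 1) / (γ + 1) * (4 * γ / (γ + 1) ^ 2))) := by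
        rw [mul_left_comm, ← sqrt_mul (by positivity), hab, sqrt_div' _ (by positivity),
          sqrt_sq (by positivity)]
        ring
    _ ≤ gapProfile γ u := by
        unfold gapProfile
        gcongr
        exact two_sqrt_mul_le_mul_add_div (by positivity) (by positivity) hu

lemma one_le_gapProfile {γ u : ℝ} (hγ : 3 ≤ γ) (hu : √(2 * γ / (γ + 1)) ≤ u) :
    1 ≤ gapProfile γ u := by
  have hγ0 : 0 < γ := by linarith
  set d := √(2 * γ / (γ + 1))
  have hd : 0 < d := sqrt_pos.mpr (by positivity)
  have hd2 : d ^ 2 = 2 * γ / (γ + 1) := sq_sqrt (by positivity)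
  have hbad : 4 * γ / (γ + 1) ^ 2 ≤ (γ - 1) / (γ + 1) * d ^ 2 := by
    rw [hd2, show (γ - 1) / (γ + 1) * (2 * γ / (γ + 1)) = 2 * γ * (γ - 1) / (γ + 1) ^ 2 by
      field_simp]
    exact div_le_div_of_nonneg_right (by nlinarith) (by positivity)
  have hval : (γ - 1) / (γ + 1) * d + 4 * γ / (γ + 1) ^ 2 / d = d := by
    field_simp
    rw [hd2]
    field_simp
    ring
  calc (1 : ℝ) = gapProfile γ d := by
        rw [gapProfile, hval, ← sqrt_sq hd.le, hd2, ← sqrt_mul (by positivity)]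
        field_simp
        exact sqrt_one.symm
    _ ≤ gapProfile γ u := mul_le_mul_of_nonneg_left
        (monotoneOn_mul_add_div (by positivity) hd hbad self_mem_Ici hu hu)
        (sqrt_nonneg _)

theorem stmt_6 (γ x : ℝ) (hγ : 1 < γ) (hx : 1 ≤ x) :
    Real.sqrt (1 + (γ + 1) / (2 * γ) * (x - 1)) -
        (x - 1) / Real.sqrt (x + (γ - 1) / (γ + 1)) * Real.sqrt (2 / (γ * (γ + 1))) ≥
      (if γ ≤ 3 then 2 * Real.sqrt (2 * (γ - 1)) / (γ + 1) else 1) := by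
  rw [ge_iff_le, gap_eq_gapProfile hγ hx]
  split_ifs with hγ3
  · exact two_sqrt_div_le_gapProfile hγ (sqrt_pos.mpr (by positivity))
  · refine one_le_gapProfile (not_le.mp hγ3).le (sqrt_le_sqrt ?_)
    rw [div_le_iff₀ (by positivity), add_mul, div_mul_cancel₀ _ (by positivity)]
    nlinarith
end

section
/- Shock density ratio for co-volume gas: Let 0 ≤ y_L < 1 and β ≥ 1 with γ > 1. If y satisfies y = y_L·(β + (γ-1)/(γ+1)) / (((γ-1+2y_L)/(γ+1))·β + (γ+1-2y_L)/(γ+1)), then 1 − y = (1 − y_L)/(1 + 2y_L(β−1)/((γ−1)β + γ + 1)), and consequently y_L ≤ y < 1. -/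
/-!
With `E = (γ - 1)β + γ + 1 > 0` and `k = 2(β - 1) ≥ 0`, clearing the factor `γ + 1` turns the
Rankine–Hugoniot density into `y = y_L (E + k) / (E + y_L k)`. Hence
`1 - y = (1 - y_L) E / (E + y_L k)` and `y - y_L = y_L (1 - y_L) k / (E + y_L k)`, both nonnegative,
the first strictly positive.
-/

section

variable {F : Type*} [Field F] {t E k : F}

lemma one_sub_mul_add_div_add_mul (hE : E ≠ 0) (hD : E + t * k ≠ 0) :
    1 - t * (E + k) / (E + t * k) = (1 - t) / (1 + t * k / E) := by
  field_simp
  ring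

lemma mul_add_div_add_mul_sub (hD : E + t * k ≠ 0) :
    t * (E + k) / (E + t * k) - t = t * (1 - t) * k / (E + t * k) := by
  field_simp
  ring

end

noncomputable def shockDensity (γ yL β : ℝ) : ℝ :=
  yL * (β + (γ - 1) / (γ + 1)) /
    ((γ - 1 + 2 * yL) / (γ + 1) * β + (γ + 1 - 2 * yL) / (γ + 1))

lemma shockDensity_eq {γ : ℝ} (hγ : γ + 1 ≠ 0) (yL β : ℝ) :
    shockDensity γ yL β =
      yL * ((γ - 1) * β + γ + 1 + 2 * (β - 1)) /
        ((γ - 1) * β + γ + 1 + yL * (2 * (β - 1))) := by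
  have h_num : yL * (β + (γ - 1) / (γ + 1)) =
      yL * ((γ - 1) * β + γ + 1 + 2 * (β - 1)) / (γ + 1) := by
    rw [eq_div_iff hγ]
    field_simp
    ring
  have h_den : (γ - 1 + 2 * yL) / (γ + 1) * β + (γ + 1 - 2 * yL) / (γ + 1) =
      ((γ - 1) * β + γ + 1 + yL * (2 * (β - 1))) / (γ + 1) := by
    rw [eq_div_iff hγ]
    field_simp
    ring
  rw [shockDensity, h_num, h_den, div_div_div_cancel_right₀ hγ]

theorem stmt_9 (γ yL β y : ℝ) (hγ : 1 < γ) (hyL0 : 0 ≤ yL) (hyL1 : yL < 1) (hβ : 1 ≤ β)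
    (hy : y = yL * (β + (γ - 1) / (γ + 1)) /
        ((γ - 1 + 2 * yL) / (γ + 1) * β + (γ + 1 - 2 * yL) / (γ + 1))) :
    1 - y = (1 - yL) / (1 + 2 * yL * (β - 1) / ((γ - 1) * β + γ + 1)) ∧
      yL ≤ y ∧ y < 1 := by
  rw [← shockDensity, shockDensity_eq (by linarith)] at hy
  set E := (γ - 1) * β + γ + 1
  set k := 2 * (β - 1)
  have hE : 0 < E := by nlinarith
  have hk : 0 ≤ k := by linarith
  have hD : 0 < E + yL * k := by positivity
  have h_one_sub : 1 - y = (1 - yL) / (1 + yL * k / E) := by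
    rw [hy, one_sub_mul_add_div_add_mul hE.ne' hD.ne']
  have h_sub : y - yL = yL * (1 - yL) * k / (E + yL * k) := by
    rw [hy, mul_add_div_add_mul_sub hD.ne']
  have hyL1' : 0 < 1 - yL := by linarith
  refine ⟨by rw [h_one_sub, show 2 * yL * (β - 1) = yL * k by ring], ?_, ?_⟩
  · have : 0 ≤ y - yL := by rw [h_sub]; positivity
    linarith
  · have : 0 < 1 - y := by rw [h_one_sub]; positivity
    linarith
end

section
/- Gap condition: For any admissible non-vacuum left and right states of the Riemann problem for the 1D compressible Euler equations with co-volume equation of state and γ > 1, the smallest and largest wave speeds satisfy λ₃⁺ − λ₁⁻ ≥ c(γ)(a_L + a_R), where c(γ) = 2√(2(γ−1))/(γ+1) if γ ∈ (1,3] and c(γ) = 1 if γ > 3. -/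
/-!
Write `s = √(1 + (γ+1)/(2γ) (p - p_Z)₊/p_Z) ≥ 1` for the factor in the extreme wave speed of
state `Z`. On the shock branch the wave curve equals `(1 - bρ_Z) a_Z · 2(s² - 1)/((γ+1)s)`, so
`a_Z s - f(p, Z) ≥ a_Z ((γ-1)s² + 2)/((γ+1)s) ≥ c(γ) a_Z`, the last step by minimising over
`s ≥ 1`; on the rarefaction branch `s = 1` and `f(p, Z) ≤ 0 ≤ (1 - c(γ)) a_Z`. Adding the two
states and using `φ(p*) ≥ 0`, i.e. `u_R - u_L ≥ -f(p*, L) - f(p*, R)`, gives the gap.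
-/

open Real

noncomputable def gapConst (γ : ℝ) : ℝ :=
  if γ ≤ 3 then 2 * √(2 * (γ - 1)) / (γ + 1) else 1

/-- `f(p, Z)` with the co-volume factor `1 - bρ_Z` passed as `e`. -/
noncomputable def waveCurve (γ e ρ pZ a p : ℝ) : ℝ :=
  if pZ ≤ p then (p - pZ) * √(2 * e / ((γ + 1) * ρ) / (p + (γ - 1) / (γ + 1) * pZ))
  else 2 * a * e / (γ - 1) * ((p / pZ) ^ ((γ - 1) / (2 * γ)) - 1)

noncomputable def shockFactor (γ pZ p : ℝ) : ℝ :=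
  √(1 + (γ + 1) / (2 * γ) * max ((p - pZ) / pZ) 0)

/-- `((γ - 1) s² + 2) / ((γ + 1) s)` is minimised over `s ≥ 1` at `s = √(2 / (γ - 1))` when
`γ ≤ 3` and at `s = 1` otherwise. -/
theorem gapConst_le_div {γ s : ℝ} (hγ : 1 < γ) (hs : 1 ≤ s) :
    gapConst γ ≤ ((γ - 1) * s ^ 2 + 2) / ((γ + 1) * s) := by
  have hden : 0 < (γ + 1) * s := by positivity
  unfold gapConst
  split_ifs with h
  · rw [div_le_div_iff₀ (by linarith) hden]
    have hsq : √(2 * (γ - 1)) ^ 2 = 2 * (γ - 1) := sq_sqrt (by linarith)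
    have amgm : 2 * √(2 * (γ - 1)) * s ≤ (γ - 1) * s ^ 2 + 2 := by
      nlinarith [sq_nonneg (√(2 * (γ - 1)) * s - 2)]
    nlinarith
  · rw [le_div_iff₀ hden]
    nlinarith [mul_nonneg (sub_nonneg.2 hs) (show (0 : ℝ) ≤ (γ - 1) * s - 2 by nlinarith)]

theorem gapConst_le_one {γ : ℝ} (hγ : 1 < γ) : gapConst γ ≤ 1 := by
  have h := gapConst_le_div hγ le_rfl
  rwa [one_pow, mul_one, mul_one, sub_add_eq_add_sub, show γ + 2 - 1 = γ + 1 by ring,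
    div_self (by linarith)] at h

section Shock

variable {γ e ρ pZ p : ℝ}

theorem shockFactor_of_le (hpZ : 0 < pZ) (hp : pZ ≤ p) :
    shockFactor γ pZ p = √(1 + (γ + 1) / (2 * γ) * ((p - pZ) / pZ)) := by
  rw [shockFactor, max_eq_left (div_nonneg (sub_nonneg.2 hp) hpZ.le)]

theorem one_le_shockFactor (hγ : 0 < γ) : 1 ≤ shockFactor γ pZ p := by
  rw [shockFactor, one_le_sqrt]
  have : 0 ≤ (γ + 1) / (2 * γ) := by positivity
  nlinarith [le_max_right ((p - pZ) / pZ) 0]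

theorem shock_eq (hγ : 1 < γ) (hρ : 0 < ρ) (he : 0 < e) (hpZ : 0 < pZ) (hp : pZ ≤ p) :
    (p - pZ) * √(2 * e / ((γ + 1) * ρ) / (p + (γ - 1) / (γ + 1) * pZ)) =
      e * √(γ * pZ / (ρ * e)) *
        (2 * (shockFactor γ pZ p ^ 2 - 1) / ((γ + 1) * shockFactor γ pZ p)) := by
  have hs1 := one_le_shockFactor (pZ := pZ) (p := p) (by linarith : 0 < γ)
  have hs2 : shockFactor γ pZ p ^ 2 = 1 + (γ + 1) / (2 * γ) * ((p - pZ) / pZ) := by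
    rw [shockFactor_of_le hpZ hp, sq_sqrt (by positivity)]
  have ha2 : √(γ * pZ / (ρ * e)) ^ 2 = γ * pZ / (ρ * e) := sq_sqrt (by positivity)
  have hpB : 0 < p + (γ - 1) / (γ + 1) * pZ := by
    have : 0 ≤ (γ - 1) / (γ + 1) := div_nonneg (by linarith) (by linarith)
    have : 0 < p := by linarith
    positivity
  have hRHS : 0 ≤ 2 * (shockFactor γ pZ p ^ 2 - 1) / ((γ + 1) * shockFactor γ pZ p) :=
    div_nonneg (by nlinarith) (by positivity)
  rw [← pow_left_inj₀ (by positivity) (mul_nonneg (by positivity) hRHS) two_ne_zero]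
  simp only [mul_pow, div_pow, ha2, hs2]
  rw [sq_sqrt (by positivity)]
  have : γ + 1 ≠ 0 := by linarith
  field_simp
  ring

theorem shock_le (hγ : 1 < γ) (hρ : 0 < ρ) (he : 0 < e) (he1 : e ≤ 1) (hpZ : 0 < pZ)
    (hp : pZ ≤ p) :
    (p - pZ) * √(2 * e / ((γ + 1) * ρ) / (p + (γ - 1) / (γ + 1) * pZ)) ≤
      √(γ * pZ / (ρ * e)) * shockFactor γ pZ p - gapConst γ * √(γ * pZ / (ρ * e)) := by
  rw [shock_eq hγ hρ he hpZ hp]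
  set a := √(γ * pZ / (ρ * e))
  set s := shockFactor γ pZ p
  have hs := one_le_shockFactor (γ := γ) (pZ := pZ) (p := p) (by linarith)
  have ha : 0 ≤ a := sqrt_nonneg _
  have hX : 0 ≤ 2 * (s ^ 2 - 1) / ((γ + 1) * s) := div_nonneg (by nlinarith) (by positivity)
  have hsplit : a * s - a * (2 * (s ^ 2 - 1) / ((γ + 1) * s)) =
      ((γ - 1) * s ^ 2 + 2) / ((γ + 1) * s) * a := by
    have : γ + 1 ≠ 0 := by linarith
    field_simp
    ring
  have hc := mul_le_mul_of_nonneg_right (gapConst_le_div hγ hs) ha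
  linarith [mul_le_mul_of_nonneg_right he1 (mul_nonneg ha hX)]

end Shock

theorem rarefaction_nonpos {γ e pZ a p : ℝ} (hγ : 1 < γ) (he : 0 ≤ e) (ha : 0 ≤ a)
    (hpZ : 0 < pZ) (hp : 0 ≤ p) (hlt : p < pZ) :
    2 * a * e / (γ - 1) * ((p / pZ) ^ ((γ - 1) / (2 * γ)) - 1) ≤ 0 := by
  have hpow : (p / pZ) ^ ((γ - 1) / (2 * γ)) ≤ 1 :=
    rpow_le_one (div_nonneg hp hpZ.le) ((div_le_one hpZ).2 hlt.le)
      (div_nonneg (by linarith) (by linarith))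
  exact mul_nonpos_of_nonneg_of_nonpos (div_nonneg (by positivity) (by linarith))
    (by linarith)

theorem waveCurve_le {γ e ρ pZ a p : ℝ} (hγ : 1 < γ) (hρ : 0 < ρ) (he : 0 < e) (he1 : e ≤ 1)
    (hpZ : 0 < pZ) (ha : a = √(γ * pZ / (ρ * e))) (hp : 0 ≤ p) :
    waveCurve γ e ρ pZ a p ≤ a * shockFactor γ pZ p - gapConst γ * a := by
  unfold waveCurve
  split_ifs with hshock
  · exact ha ▸ shock_le hγ hρ he he1 hpZ hshock
  · have hlt : p < pZ := not_le.1 hshock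
    have ha0 : 0 ≤ a := ha ▸ sqrt_nonneg _
    have hs : shockFactor γ pZ p = 1 := by
      rw [shockFactor, max_eq_right (div_nonpos_of_nonpos_of_nonneg (by linarith) hpZ.le),
        mul_zero, add_zero, sqrt_one]
    rw [hs, mul_one]
    nlinarith [rarefaction_nonpos hγ he.le ha0 hpZ hp hlt, gapConst_le_one hγ]

theorem stmt_11_general (γ b ρL ρR uL uR pL pR aL aR pstar : ℝ) (φ : ℝ → ℝ)
    (hγ : 1 < γ)
    (hρL : 0 < ρL) (hρR : 0 < ρR) (hpL : 0 < pL) (hpR : 0 < pR)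
    (hcovL0 : 0 < 1 - b * ρL) (hcovL1 : 1 - b * ρL < 1)
    (hcovR0 : 0 < 1 - b * ρR) (hcovR1 : 1 - b * ρR < 1)
    (haL : aL = Real.sqrt (γ * pL / (ρL * (1 - b * ρL))))
    (haR : aR = Real.sqrt (γ * pR / (ρR * (1 - b * ρR))))
    (hφ : ∀ p, φ p =
      (if pL ≤ p then
          (p - pL) * Real.sqrt (2 * (1 - b * ρL) / ((γ + 1) * ρL) /
            (p + (γ - 1) / (γ + 1) * pL))
        else
          2 * aL * (1 - b * ρL) / (γ - 1) * ((p / pL) ^ ((γ - 1) / (2 * γ)) - 1)) +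
      (if pR ≤ p then
          (p - pR) * Real.sqrt (2 * (1 - b * ρR) / ((γ + 1) * ρR) /
            (p + (γ - 1) / (γ + 1) * pR))
        else
          2 * aR * (1 - b * ρR) / (γ - 1) * ((p / pR) ^ ((γ - 1) / (2 * γ)) - 1)) +
      uR - uL)
    (hpstar : 0 ≤ pstar)
    (hroot : φ pstar = 0 ∨ (pstar = 0 ∧ 0 ≤ φ 0)) :
    (uR + aR * Real.sqrt (1 + (γ + 1) / (2 * γ) * max ((pstar - pR) / pR) 0)) -
      (uL - aL * Real.sqrt (1 + (γ + 1) / (2 * γ) * max ((pstar - pL) / pL) 0)) ≥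
      (if γ ≤ 3 then 2 * Real.sqrt (2 * (γ - 1)) / (γ + 1) else 1) * (aL + aR) := by
  have hφ_nonneg : 0 ≤ φ pstar := by
    rcases hroot with hzero | ⟨rfl, hφ0⟩
    · exact hzero.ge
    · exact hφ0
  have hcurves : 0 ≤ waveCurve γ (1 - b * ρL) ρL pL aL pstar +
      waveCurve γ (1 - b * ρR) ρR pR aR pstar + uR - uL := hφ pstar ▸ hφ_nonneg
  have hL := waveCurve_le hγ hρL hcovL0 hcovL1.le hpL haL hpstar
  have hR := waveCurve_le hγ hρR hcovR0 hcovR1.le hpR haR hpstar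
  change uR + aR * shockFactor γ pR pstar - (uL - aL * shockFactor γ pL pstar) ≥
    gapConst γ * (aL + aR)
  linarith

theorem stmt_11 (γ b ρL ρR uL uR pL pR aL aR pstar : ℝ) (φ : ℝ → ℝ)
    (hγ : 1 < γ) (hb : 0 ≤ b)
    (hρL : 0 < ρL) (hρR : 0 < ρR) (hpL : 0 < pL) (hpR : 0 < pR)
    (hcovL0 : 0 < 1 - b * ρL) (hcovL1 : 1 - b * ρL < 1)
    (hcovR0 : 0 < 1 - b * ρR) (hcovR1 : 1 - b * ρR < 1)
    (haL : aL = Real.sqrt (γ * pL / (ρL * (1 - b * ρL))))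
    (haR : aR = Real.sqrt (γ * pR / (ρR * (1 - b * ρR))))
    (hφ : ∀ p, φ p =
      (if pL ≤ p then
          (p - pL) * Real.sqrt (2 * (1 - b * ρL) / ((γ + 1) * ρL) /
            (p + (γ - 1) / (γ + 1) * pL))
        else
          2 * aL * (1 - b * ρL) / (γ - 1) * ((p / pL) ^ ((γ - 1) / (2 * γ)) - 1)) +
      (if pR ≤ p then
          (p - pR) * Real.sqrt (2 * (1 - b * ρR) / ((γ + 1) * ρR) /
            (p + (γ - 1) / (γ + 1) * pR))
        else
          2 * aR * (1 - b * ρR) / (γ - 1) * ((p / pR) ^ ((γ - 1) / (2 * γ)) - 1)) +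
      uR - uL)
    (hpstar : 0 ≤ pstar)
    (hroot : φ pstar = 0 ∨ (pstar = 0 ∧ 0 ≤ φ 0)) :
    (uR + aR * Real.sqrt (1 + (γ + 1) / (2 * γ) * max ((pstar - pR) / pR) 0)) -
      (uL - aL * Real.sqrt (1 + (γ + 1) / (2 * γ) * max ((pstar - pL) / pL) 0)) ≥
      (if γ ≤ 3 then 2 * Real.sqrt (2 * (γ - 1)) / (γ + 1) else 1) * (aL + aR) :=
  stmt_11_general γ b ρL ρR uL uR pL pR aL aR pstar φ hγ hρL hρR hpL hpR hcovL0 hcovL1 hcovR0 hcovR1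
    haL haR hφ hpstar hroot
end
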